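/- Duality for the minimal connection: for points a¹,…,aᵐ, b¹,…,bᵐ ∈ ℝ³, the supremum over 1-Lipschitz functions ξ : ℝ³ → ℝ of Σⱼ ξ(aʲ) − Σⱼ ξ(bʲ) equals min_{π ∈ S_m} Σⱼ |aʲ − b^{π(j)}|. -/

import Mathlib

/-!
Let `σ` be an optimal assignment. Lipschitz functions give the easy inequality. Conversely, with
reduced costs `w i k = |aⁱ − b^{σ k}| − |aⁱ − b^{σ i}|`, optimality of `σ` says that every cycle
`k₀ → k₁ → ⋯ → k₀` has nonnegative `w`-length (rotating `σ` along it is again an assignment).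
Hence the shortest simple walks give potentials `p` with `p i ≤ w i k + p k`, and
`ξ x = minₖ (p k + |x − b^{σ k}|)` is 1-Lipschitz with `ξ(aʲ) − ξ(b^{σ j}) ≥ |aʲ − b^{σ j}|`.
-/

open Finset

section Potential

variable {ι : Type*} (w : ι → ι → ℝ)

def walkCost : List ι → ℝ
  | x :: y :: L => w x y + walkCost (y :: L)
  | _ => 0

theorem walkCost_append : ∀ (L : List ι) (y : ι) (M : List ι),
    walkCost w (L ++ y :: M) = walkCost w (L ++ [y]) + walkCost w (y :: M)
  | [], _, _ => by simp [walkCost]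
  | [_], _, _ => by simp [walkCost]
  | x :: z :: L, y, M => by
    simp only [List.cons_append, walkCost]
    rw [← List.cons_append, walkCost_append (z :: L) y M, List.cons_append]
    ring

variable [DecidableEq ι] [Fintype ι] {w}

theorem sum_formPerm_eq_walkCost_add (hw : ∀ i, w i i = 0) :
    ∀ (x : ι) (L : List ι), (x :: L).Nodup →
      ∑ j, w j ((x :: L).formPerm j) =
        walkCost w (x :: L) + w ((x :: L).getLast (List.cons_ne_nil x L)) x
  | x, [], _ => by simp [walkCost, hw]
  | x, y :: L, hnd => by
    obtain ⟨hx, hnd'⟩ := List.nodup_cons.mp hnd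
    set τ := (y :: L).formPerm
    set z := (y :: L).getLast (List.cons_ne_nil y L)
    have hτx : τ x = x := List.formPerm_apply_of_notMem hx
    have hτz : τ z = y := List.formPerm_apply_getLast y L
    have hxz : x ≠ z := fun h => hx (h ▸ List.getLast_mem _)
    -- `swap x y ∘ τ` differs from `τ` only at `x` and at `z = τ⁻¹ y`
    have hdiff : ∑ j, (w j (Equiv.swap x y (τ j)) - w j (τ j)) =
        (w x y - w x x) + (w z x - w z y) := by
      rw [Fintype.sum_eq_add x z hxz fun j ⟨hjx, hjz⟩ => ?_, hτx, hτz,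
        Equiv.swap_apply_left, Equiv.swap_apply_right]
      rw [Equiv.swap_apply_of_ne_of_ne (fun h => hjx (τ.injective (h.trans hτx.symm)))
        (fun h => hjz (τ.injective (h.trans hτz.symm))), sub_self]
    rw [sum_sub_distrib, sum_formPerm_eq_walkCost_add hw y L hnd', hw] at hdiff
    rw [List.formPerm_cons_cons, List.getLast_cons (List.cons_ne_nil y L), walkCost]
    simp only [Equiv.Perm.mul_apply]
    linarith

theorem walkCost_add_nonneg (hw : ∀ i, w i i = 0) (hcyc : ∀ τ : Equiv.Perm ι, 0 ≤ ∑ i, w i (τ i))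
    {x : ι} {L : List ι} (hnd : (x :: L).Nodup) :
    0 ≤ walkCost w (x :: L) + w ((x :: L).getLast (List.cons_ne_nil x L)) x :=
  sum_formPerm_eq_walkCost_add hw x L hnd ▸ hcyc _

variable (w) in
/-- The length of a shortest simple walk starting at `i`. -/
noncomputable def minWalkCost (i : ι) : ℝ :=
  (univ.filter fun L : {L : List ι // L.Nodup} => i ∉ L.1).inf' ⟨⟨[], List.nodup_nil⟩, by simp⟩
    fun L => walkCost w (i :: L.1)

theorem minWalkCost_le {i : ι} {L : List ι} (hL : (i :: L).Nodup) :
    minWalkCost w i ≤ walkCost w (i :: L) :=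
  inf'_le (fun L : {L : List ι // L.Nodup} => walkCost w (i :: L.1))
    (b := ⟨L, hL.of_cons⟩) (by simpa using (List.nodup_cons.mp hL).1)

theorem exists_minWalkCost_eq (k : ι) :
    ∃ L : List ι, (k :: L).Nodup ∧ minWalkCost w k = walkCost w (k :: L) := by
  obtain ⟨⟨L, hL⟩, hmem, heq⟩ := exists_mem_eq_inf' (⟨⟨[], List.nodup_nil⟩, by simp⟩ :
    (univ.filter fun L : {L : List ι // L.Nodup} => k ∉ L.1).Nonempty)
    fun L => walkCost w (k :: L.1)
  exact ⟨L, List.nodup_cons.mpr ⟨by simpa using hmem, hL⟩, heq⟩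

theorem minWalkCost_le_add (hw : ∀ i, w i i = 0)
    (hcyc : ∀ τ : Equiv.Perm ι, 0 ≤ ∑ i, w i (τ i)) (i k : ι) :
    minWalkCost w i ≤ w i k + minWalkCost w k := by
  obtain ⟨L, hnd, hk⟩ := exists_minWalkCost_eq (w := w) k
  rw [hk]
  by_cases hik : i = k
  · subst hik
    rw [hw, zero_add]
    exact minWalkCost_le hnd
  by_cases hiL : i ∈ L
  · -- cut the walk at `i`: its part from `k` to `i`, closed up by the edge `i → k`, is a cycle
    obtain ⟨P, Q, rfl⟩ := List.append_of_mem hiL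
    have hcut : walkCost w (k :: (P ++ i :: Q)) =
        walkCost w (k :: (P ++ [i])) + walkCost w (i :: Q) :=
      walkCost_append w (k :: P) i Q
    have hcycle := walkCost_add_nonneg hw hcyc (x := k) (L := P ++ [i])
      (hnd.sublist ((((List.nil_sublist Q).cons_cons i).append_left P).cons_cons k))
    have hQ : minWalkCost w i ≤ walkCost w (i :: Q) :=
      minWalkCost_le (hnd.sublist (List.sublist_append_right (k :: P) (i :: Q)))
    have hlast : (k :: (P ++ [i])).getLast (List.cons_ne_nil _ _) = i := by simp
    rw [hlast] at hcycle
    linarith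
  · have hcons : (i :: k :: L).Nodup := List.nodup_cons.mpr ⟨by simp [hik, hiL], hnd⟩
    exact minWalkCost_le hcons

end Potential

section MinimalConnection

variable {α ι : Type*} [PseudoMetricSpace α] [Fintype ι]

theorem LipschitzWith.sum_sub_sum_le_sum_dist {ξ : α → ℝ} (hξ : LipschitzWith 1 ξ)
    (a b : ι → α) (π : Equiv.Perm ι) :
    ∑ j, ξ (a j) - ∑ j, ξ (b j) ≤ ∑ j, dist (a j) (b (π j)) := by
  rw [← Equiv.sum_comp π fun j => ξ (b j), ← sum_sub_distrib]
  gcongr with j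
  simpa [add_comm] using hξ.le_add_mul (a j) (b (π j))

theorem lipschitzWith_iInf_add_dist (p : ι → ℝ) (y : ι → α) :
    LipschitzWith 1 fun x => ⨅ k, (p k + dist x (y k)) := by
  cases isEmpty_or_nonempty ι
  · simpa using (LipschitzWith.const (α := α) (0 : ℝ)).weaken zero_le_one
  refine LipschitzWith.of_le_add fun x x' => ?_
  rw [← sub_le_iff_le_add]
  refine le_ciInf fun k => sub_le_iff_le_add.mpr ?_
  calc ⨅ k, (p k + dist x (y k)) ≤ p k + dist x (y k) :=
        ciInf_le (Set.finite_range _).bddBelow k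
    _ ≤ p k + dist x' (y k) + dist x x' := by linarith [dist_triangle x x' (y k)]

theorem exists_lipschitzWith_sum_sub_sum_eq (a b : ι → α) {σ : Equiv.Perm ι}
    (hσ : ∀ π : Equiv.Perm ι, ∑ j, dist (a j) (b (σ j)) ≤ ∑ j, dist (a j) (b (π j))) :
    ∃ ξ : α → ℝ, LipschitzWith 1 ξ ∧
      ∑ j, ξ (a j) - ∑ j, ξ (b j) = ∑ j, dist (a j) (b (σ j)) := by
  classical
  set w : ι → ι → ℝ := fun i k => dist (a i) (b (σ k)) - dist (a i) (b (σ i))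
  have hw : ∀ i, w i i = 0 := fun i => sub_self _
  have hcyc : ∀ τ : Equiv.Perm ι, 0 ≤ ∑ i, w i (τ i) := fun τ => by
    simpa [w, sum_sub_distrib] using hσ (σ * τ)
  set p := minWalkCost w
  set ξ : α → ℝ := fun x => ⨅ k, (p k + dist x (b (σ k)))
  have hξb : ∀ j, ξ (b (σ j)) ≤ p j := fun j => by
    simpa using ciInf_le (Set.finite_range fun k => p k + dist (b (σ j)) (b (σ k))).bddBelow j
  have hξa : ∀ j, p j + dist (a j) (b (σ j)) ≤ ξ (a j) := fun j => by
    have : Nonempty ι := ⟨j⟩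
    refine le_ciInf fun k => ?_
    linarith [minWalkCost_le_add hw hcyc j k]
  have hξ : LipschitzWith 1 ξ := lipschitzWith_iInf_add_dist p (b ∘ σ)
  refine ⟨ξ, hξ, le_antisymm (hξ.sum_sub_sum_le_sum_dist a b σ) ?_⟩
  rw [← Equiv.sum_comp σ fun j => ξ (b j), ← sum_sub_distrib]
  gcongr with j
  linarith [hξa j, hξb j]

theorem isGreatest_lipschitzWith_sum_sub_sum (a b : ι → α) :
    IsGreatest {s : ℝ | ∃ ξ : α → ℝ, LipschitzWith 1 ξ ∧ s = ∑ j, ξ (a j) - ∑ j, ξ (b j)}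
      (⨅ π : Equiv.Perm ι, ∑ j, dist (a j) (b (π j))) := by
  obtain ⟨σ, hσ⟩ := Finite.exists_min fun π : Equiv.Perm ι => ∑ j, dist (a j) (b (π j))
  rw [le_antisymm (ciInf_le (Finite.bddBelow_range _) σ) (le_ciInf hσ)]
  obtain ⟨ξ, hξ, hξσ⟩ := exists_lipschitzWith_sum_sub_sum_eq a b hσ
  refine ⟨⟨ξ, hξ, hξσ.symm⟩, ?_⟩
  rintro s ⟨ξ', hξ', rfl⟩
  exact hξ'.sum_sub_sum_le_sum_dist a b σ

end MinimalConnection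

/-- Duality for the minimal connection: the supremum over 1-Lipschitz functions
`ξ : ℝ³ → ℝ` of `∑ⱼ ξ(aʲ) − ∑ⱼ ξ(bʲ)` equals the minimal connection length
`min_π ∑ⱼ |aʲ − b^{π(j)}|`. -/
theorem minimal_connection_duality
    (m : ℕ) (a b : Fin m → EuclideanSpace ℝ (Fin 3)) :
    sSup {s : ℝ | ∃ ξ : EuclideanSpace ℝ (Fin 3) → ℝ, LipschitzWith 1 ξ ∧
        s = (∑ j, ξ (a j)) - (∑ j, ξ (b j))} =
      ⨅ π : Equiv.Perm (Fin m), ∑ j, dist (a j) (b (π j)) :=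
  (isGreatest_lipschitzWith_sum_sub_sum a b).csSup_eq
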